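/- arXiv:1106.5177 — 2 statements merged into one kernel-verified Lean document; each statement's English description precedes it below -/
import Mathlib

section
/- Let A ∈ ℂ^{N×M} have unit-norm columns, let x be s-sparse with support {J_1,…,J_s}, b = Ax + e, and η > 0. Assume |⟨a_i, a_j⟩| ≤ η for all distinct i, j ∈ supp(x). If η(2s−1)·(x_max/x_min) + 2‖e‖₂/x_min < 1, then for every k ∈ supp(x) and every l with |⟨a_l, a_j⟩| ≤ η for all j ∈ supp(x), one has |⟨b, a_k⟩| > |⟨b, a_l⟩|. Hence the s largest values of |⟨b, a_j⟩| are attained at indices in the η-coherence band of supp(x). -/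
/-!
Write `b = ∑_{j ∈ S} x_j a_j + e`. At `l` outside the η-band every term of `⟪b, a_l⟫` is at most
`x_max η`, so `|⟪b, a_l⟫| ≤ s x_max η + ‖e‖`. At `k ∈ S` the term `j = k` is `conj x_k` because
`‖a_k‖ = 1`, and the other `s - 1` terms are again at most `x_max η`, so
`|⟪b, a_k⟫| ≥ x_min - (s - 1) x_max η - ‖e‖`. The hypothesis on `η` is exactly the statement that
the lower bound beats the upper one.
-/

open Finset
open scoped InnerProductSpace

section MatchedFilter

variable {𝕜 E ι : Type*} [RCLike 𝕜] [NormedAddCommGroup E] [InnerProductSpace 𝕜 E]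
  {a : ι → E} {x : ι → 𝕜} {S : Finset ι} {X η : ℝ}

lemma norm_inner_sum_smul_le (v : E) (hx : ∀ j ∈ S, ‖x j‖ ≤ X)
    (hcoh : ∀ j ∈ S, ‖⟪a j, v⟫_𝕜‖ ≤ η) :
    ‖⟪∑ j ∈ S, x j • a j, v⟫_𝕜‖ ≤ #S * (X * η) := by
  rw [sum_inner, ← nsmul_eq_mul]
  refine (norm_sum_le _ _).trans (sum_le_card_nsmul _ _ _ fun j hj => ?_)
  rw [inner_smul_left, norm_mul, RCLike.norm_conj]
  exact mul_le_mul (hx j hj) (hcoh j hj) (norm_nonneg _) ((norm_nonneg _).trans (hx j hj))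

lemma inner_sum_smul_eq_conj_add_sum_erase [DecidableEq ι] {k : ι} (hk : k ∈ S) (hak : ‖a k‖ = 1) :
    ⟪∑ j ∈ S, x j • a j, a k⟫_𝕜 =
      starRingEnd 𝕜 (x k) + ⟪∑ j ∈ S.erase k, x j • a j, a k⟫_𝕜 := by
  rw [← add_sum_erase S _ hk, inner_add_left, inner_smul_left, inner_self_eq_norm_sq_to_K, hak]
  simp

lemma norm_inner_le_of_norm_eq_one (e : E) {v : E} (hv : ‖v‖ = 1) : ‖⟪e, v⟫_𝕜‖ ≤ ‖e‖ := by
  simpa [hv] using norm_inner_le_norm (𝕜 := 𝕜) e v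

lemma norm_inner_sum_smul_add_le (e : E) {l : ι} (hal : ‖a l‖ = 1) (hx : ∀ j ∈ S, ‖x j‖ ≤ X)
    (hcoh : ∀ j ∈ S, ‖⟪a j, a l⟫_𝕜‖ ≤ η) :
    ‖⟪∑ j ∈ S, x j • a j + e, a l⟫_𝕜‖ ≤ #S * (X * η) + ‖e‖ := by
  rw [inner_add_left]
  exact (norm_add_le _ _).trans
    (add_le_add (norm_inner_sum_smul_le _ hx hcoh) (norm_inner_le_of_norm_eq_one e hal))

lemma sub_le_norm_inner_sum_smul_add (e : E) {k : ι} (hk : k ∈ S) (hak : ‖a k‖ = 1)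
    (hx : ∀ j ∈ S, ‖x j‖ ≤ X) (hcoh : ∀ j ∈ S, j ≠ k → ‖⟪a j, a k⟫_𝕜‖ ≤ η) :
    ‖x k‖ - ((#S - 1) * (X * η) + ‖e‖) ≤ ‖⟪∑ j ∈ S, x j • a j + e, a k⟫_𝕜‖ := by
  classical
  have hrest : ‖⟪∑ j ∈ S.erase k, x j • a j, a k⟫_𝕜 + ⟪e, a k⟫_𝕜‖ ≤ (#S - 1) * (X * η) + ‖e‖ := by
    rw [← cast_card_erase_of_mem hk]
    refine (norm_add_le _ _).trans (add_le_add ?_ (norm_inner_le_of_norm_eq_one e hak))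
    exact norm_inner_sum_smul_le _ (fun j hj => hx j (mem_of_mem_erase hj))
      fun j hj => hcoh j (mem_of_mem_erase hj) (ne_of_mem_erase hj)
  rw [inner_add_left, inner_sum_smul_eq_conj_add_sum_erase hk hak, add_assoc]
  have hsplit := norm_sub_le_norm_add (starRingEnd 𝕜 (x k))
    (⟪∑ j ∈ S.erase k, x j • a j, a k⟫_𝕜 + ⟪e, a k⟫_𝕜)
  rw [RCLike.norm_conj] at hsplit
  linarith

end MatchedFilter

theorem bmt_guarantee_general
    {N M : ℕ} (a : Fin M → EuclideanSpace ℂ (Fin N))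
    (ha : ∀ j, ‖a j‖ = 1)
    (x : Fin M → ℂ) (S : Finset (Fin M)) (s : ℕ)
    (hcard : S.card = s)
    (hsupp : ∀ j, x j ≠ 0 ↔ j ∈ S)
    (e b : EuclideanSpace ℂ (Fin N))
    (hb : b = (∑ j, x j • a j) + e)
    (η : ℝ)
    (hband : ∀ i ∈ S, ∀ j ∈ S, i ≠ j → ‖(inner ℂ (a i) (a j) : ℂ)‖ ≤ η)
    (xmin xmax : ℝ) (hxmin : 0 < xmin)
    (hxminle : ∀ j ∈ S, xmin ≤ ‖x j‖)
    (hxmaxle : ∀ j ∈ S, ‖x j‖ ≤ xmax)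
    (hcond : η * (2 * (s : ℝ) - 1) * (xmax / xmin) + 2 * ‖e‖ / xmin < 1) :
    ∀ k ∈ S, ∀ l : Fin M, (∀ j ∈ S, ‖(inner ℂ (a l) (a j) : ℂ)‖ ≤ η) →
      ‖(inner ℂ b (a l) : ℂ)‖ < ‖(inner ℂ b (a k) : ℂ)‖ := by
  intro k hk l hl
  have hsum : ∑ j, x j • a j = ∑ j ∈ S, x j • a j :=
    (sum_subset S.subset_univ fun j _ hj => by
      rw [not_not.mp (mt (hsupp j).mp hj), zero_smul]).symm
  have hupper := norm_inner_sum_smul_add_le e (ha l) hxmaxle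
    fun j hj => (norm_inner_symm _ _).trans_le (hl j hj)
  have hlower := sub_le_norm_inner_sum_smul_add e hk (ha k) hxmaxle
    fun j hj hjk => hband j hj k hk hjk
  have hgap : η * (2 * (s : ℝ) - 1) * xmax + 2 * ‖e‖ < xmin := by
    rw [mul_div_assoc', ← add_div, div_lt_one hxmin] at hcond
    exact hcond
  rw [hb, hsum]
  rw [hcard] at hupper hlower
  linarith [hxminle k hk]

/-- Band-excluded Matched Thresholding guarantee: the matched-filter output at
true support indices dominates the output outside the η-coherence band. -/
theorem bmt_guarantee
    {N M : ℕ} (a : Fin M → EuclideanSpace ℂ (Fin N))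
    (ha : ∀ j, ‖a j‖ = 1)
    (x : Fin M → ℂ) (S : Finset (Fin M)) (s : ℕ)
    (hcard : S.card = s)
    (hsupp : ∀ j, x j ≠ 0 ↔ j ∈ S)
    (e b : EuclideanSpace ℂ (Fin N))
    (hb : b = (∑ j, x j • a j) + e)
    (η : ℝ) (hη : 0 < η)
    (hband : ∀ i ∈ S, ∀ j ∈ S, i ≠ j → ‖(inner ℂ (a i) (a j) : ℂ)‖ ≤ η)
    (xmin xmax : ℝ) (hxmin : 0 < xmin)
    (hxminle : ∀ j ∈ S, xmin ≤ ‖x j‖)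
    (hxmaxle : ∀ j ∈ S, ‖x j‖ ≤ xmax)
    (hcond : η * (2 * (s : ℝ) - 1) * (xmax / xmin) + 2 * ‖e‖ / xmin < 1) :
    ∀ k ∈ S, ∀ l : Fin M, (∀ j ∈ S, ‖(inner ℂ (a l) (a j) : ℂ)‖ ≤ η) →
      ‖(inner ℂ b (a l) : ℂ)‖ < ‖(inner ℂ b (a k) : ℂ)‖ :=
  bmt_guarantee_general a ha x S s hcard hsupp e b hb η hband xmin xmax hxmin hxminle hxmaxle hcond
end

section
/- Let A ∈ ℂ^{N×M} with unit-norm columns, x s-sparse, η > 0, b = Ax + e. Assume the separation condition B_η(i) ∩ B_η^{(2)}(j) = ∅ for all i, j ∈ supp(x), and η(5s−4)·(x_max/x_min) + (5/2)·‖e‖₂/x_min < 1. Then the output x̂ of s iterations of the Band-excluded Orthogonal Matching Pursuit (BOMP) satisfies: supp(x̂) ⊆ B_η(supp(x)), and there is an injective map f : supp(x̂) → supp(x) such that each i ∈ supp(x̂) lies in B_η(f(i)). -/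
/-!
Every index chosen by BOMP lies in the band of the true support; this is proved step by step.
Separation makes each chosen index coherent with exactly one support index, so while fewer than
`s` indices have been chosen some support index `i₀` is still untouched, and it lies outside the
double band of the chosen set, hence is eligible. The least-squares residual is orthogonal to the
chosen columns, which are pairwise `η`-incoherent, and a Gershgorin-type argument bounds the `ℓ¹`
norm of the current estimate. So the residual correlates with `a i₀` by roughly `x_min`, but with
a column outside the band of the support by only roughly `η s x_max + ‖e‖`, and the hypothesis
`η (5s - 4) x_max / x_min + 5/2 ‖e‖ / x_min < 1` says the former wins. Excluding the double band
also keeps the bands of distinct chosen indices disjoint, which gives the injective map.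
-/

open Finset
open scoped InnerProductSpace

variable {𝕜 E ι : Type*} [RCLike 𝕜] [NormedAddCommGroup E] [InnerProductSpace 𝕜 E]

theorem inner_eq_zero_of_forall_norm_le_norm_sub_smul {u v : E} (hu : ‖u‖ = 1)
    (h : ∀ c : 𝕜, ‖v‖ ≤ ‖v - c • u‖) : ⟪u, v⟫_𝕜 = 0 := by
  set c := ⟪u, v⟫_𝕜
  have hc : ‖v - c • u‖ ^ 2 = ‖v‖ ^ 2 - ‖c‖ ^ 2 := by
    rw [@norm_sub_sq 𝕜, inner_smul_right, ← inner_conj_symm, RCLike.mul_conj, norm_smul, hu]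
    norm_cast
    ring
  have hc₀ : ‖c‖ ^ 2 ≤ 0 := by nlinarith [h c, norm_nonneg v]
  exact norm_eq_zero.mp (pow_eq_zero_iff two_ne_zero |>.mp (le_antisymm hc₀ (sq_nonneg _)))

theorem inner_sub_sum_smul_eq_zero_of_forall_norm_le [Fintype ι] {a : ι → E} {b : E}
    {T : Set ι} {w : ι → 𝕜} (hw : ∀ j, w j ≠ 0 → j ∈ T)
    (hmin : ∀ z : ι → 𝕜, (∀ j, z j ≠ 0 → j ∈ T) →
      ‖∑ j, w j • a j - b‖ ≤ ‖∑ j, z j • a j - b‖)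
    {k : ι} (hk : k ∈ T) (hak : ‖a k‖ = 1) : ⟪a k, b - ∑ j, w j • a j⟫_𝕜 = 0 := by
  classical
  refine inner_eq_zero_of_forall_norm_le_norm_sub_smul hak fun c => ?_
  let z : ι → 𝕜 := w + Pi.single k c
  have hz : ∀ j, z j ≠ 0 → j ∈ T := by
    intro j hj
    by_cases hjk : j = k
    · exact hjk ▸ hk
    · exact hw j (by simpa [z, hjk] using hj)
  have hsum : ∑ j, z j • a j = ∑ j, w j • a j + c • a k := by
    simp [z, add_smul, sum_add_distrib, Pi.single_apply]
  have hle := hmin z hz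
  rwa [hsum, norm_sub_rev (_ + _), sub_add_eq_sub_sub_swap, sub_right_comm, norm_sub_rev] at hle

theorem norm_inner_sum_smul_le_s14 {a : ι → E} {T : Finset ι} {c : ι → 𝕜} {u : E} {η : ℝ}
    (h : ∀ j ∈ T, ‖⟪u, a j⟫_𝕜‖ ≤ η) : ‖⟪u, ∑ j ∈ T, c j • a j⟫_𝕜‖ ≤ η * ∑ j ∈ T, ‖c j‖ := by
  rw [inner_sum, mul_sum]
  refine (norm_sum_le _ _).trans (sum_le_sum fun j hj => ?_)
  rw [inner_smul_right, norm_mul, mul_comm]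
  exact mul_le_mul_of_nonneg_right (h j hj) (norm_nonneg _)

theorem norm_inner_sum_smul_sub_le [DecidableEq ι] {a : ι → E} {T : Finset ι} {c : ι → 𝕜}
    {u : E} {η : ℝ} {j₀ : ι} (hj₀ : j₀ ∈ T) (h : ∀ j ∈ T, j ≠ j₀ → ‖⟪u, a j⟫_𝕜‖ ≤ η) :
    ‖⟪u, ∑ j ∈ T, c j • a j⟫_𝕜 - c j₀ * ⟪u, a j₀⟫_𝕜‖ ≤ η * ∑ j ∈ T.erase j₀, ‖c j‖ := by
  rw [← add_sum_erase T _ hj₀, inner_add_right, inner_smul_right, add_sub_cancel_left]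
  exact norm_inner_sum_smul_le_s14 fun j hj => h j (mem_of_mem_erase hj) (ne_of_mem_erase hj)

theorem sum_norm_mul_le_of_norm_inner_sum_smul_le {a : ι → E} {P : Finset ι} {c : ι → 𝕜}
    {η β : ℝ} (ha : ∀ k ∈ P, ‖a k‖ = 1)
    (hcoh : ∀ k ∈ P, ∀ j ∈ P, j ≠ k → ‖⟪a k, a j⟫_𝕜‖ ≤ η)
    (hβ : ∀ k ∈ P, ‖⟪a k, ∑ j ∈ P, c j • a j⟫_𝕜‖ ≤ β) :
    (∑ j ∈ P, ‖c j‖) * (1 - (#P - 1) * η) ≤ #P * β := by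
  classical
  have hk : ∀ k ∈ P, ‖c k‖ ≤ β + η * (∑ j ∈ P, ‖c j‖ - ‖c k‖) := by
    intro k hk
    have h := norm_inner_sum_smul_sub_le (c := c) hk (hcoh k hk)
    rw [inner_self_eq_norm_sq_to_K, ha k hk, RCLike.ofReal_one, one_pow, mul_one,
      sum_erase_eq_sub hk] at h
    exact (norm_le_norm_add_norm_sub _ _).trans (add_le_add (hβ k hk) h)
  have hsum := sum_le_sum hk
  rw [sum_add_distrib, sum_const, ← mul_sum, sum_sub_distrib, sum_const, nsmul_eq_mul,
    nsmul_eq_mul] at hsum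
  linarith

theorem two_mul_mul_le_of_mul_one_sub_le {η σ m X E L : ℝ} (hη : 0 < η) (hm : 0 ≤ m)
    (hmσ : m ≤ σ) (hsmall : η * (5 * σ + 1) < 1) (hX : 0 ≤ X) (hE : 0 ≤ E)
    (hL : L * (1 - (m - 1) * η) ≤ m * (X + η * (σ * X) + E)) :
    2 * η * L ≤ 3 * η * σ * X + E / 2 := by
  have hσ : 0 ≤ σ := hm.trans hmσ
  have hD : 0 < 1 - (m - 1) * η := by nlinarith
  have hX' : 2 * m * (1 + σ * η) ≤ 3 * σ * (1 - (m - 1) * η) := by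
    nlinarith [mul_nonneg (sub_nonneg.mpr hmσ) hη.le, mul_nonneg hσ (sub_nonneg.mpr hsmall.le),
      mul_nonneg (mul_nonneg hσ hη.le) (sub_nonneg.mpr hmσ)]
  have hE' : 2 * η * m ≤ (1 - (m - 1) * η) / 2 := by
    nlinarith [mul_nonneg (sub_nonneg.mpr hmσ) hη.le]
  refine le_of_mul_le_mul_right ?_ hD
  calc 2 * η * L * (1 - (m - 1) * η) ≤ 2 * η * (m * (X + η * (σ * X) + E)) := by
        rw [mul_assoc]; exact mul_le_mul_of_nonneg_left hL (by positivity)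
    _ = η * X * (2 * m * (1 + σ * η)) + 2 * η * m * E := by ring
    _ ≤ η * X * (3 * σ * (1 - (m - 1) * η)) + (1 - (m - 1) * η) / 2 * E := by gcongr
    _ = (3 * η * σ * X + E / 2) * (1 - (m - 1) * η) := by ring

variable (𝕜) in
def band (a : ι → E) (η : ℝ) (T : Set ι) : Set ι := {i | ∃ k ∈ T, η < ‖⟪a i, a k⟫_𝕜‖}

variable (𝕜) in
def BandSeparated (a : ι → E) (η : ℝ) (S : Set ι) : Prop :=
  ∀ i ∈ S, ∀ j ∈ S, i ≠ j → band 𝕜 a η {i} ∩ band 𝕜 a η (band 𝕜 a η {j}) = ∅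

section Band

variable {a : ι → E} {η : ℝ} {S T : Set ι} {i j j₀ k : ι}

@[simp]
theorem mem_band : i ∈ band 𝕜 a η T ↔ ∃ k ∈ T, η < ‖⟪a i, a k⟫_𝕜‖ := Iff.rfl

theorem mem_band_singleton_comm : i ∈ band 𝕜 a η {k} ↔ k ∈ band 𝕜 a η {i} := by
  simp [norm_inner_symm]

theorem subset_band (ha : ∀ k, ‖a k‖ = 1) (hη : η < 1) : T ⊆ band 𝕜 a η T :=
  fun k hk => ⟨k, hk, by simpa [inner_self_eq_norm_sq_to_K, ha] using hη⟩

theorem BandSeparated.eq_of_mem_band (hS : BandSeparated 𝕜 a η S) (ha : ∀ k, ‖a k‖ = 1)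
    (hη : η < 1) (hj : j ∈ S) (hj₀ : j₀ ∈ S) (hkj : k ∈ band 𝕜 a η {j})
    (hkj₀ : k ∈ band 𝕜 a η {j₀}) : j = j₀ := by
  by_contra hne
  exact Set.eq_empty_iff_forall_notMem.mp (hS j hj j₀ hj₀ hne) k ⟨hkj, subset_band ha hη hkj₀⟩

theorem BandSeparated.norm_inner_le (hS : BandSeparated 𝕜 a η S) (ha : ∀ k, ‖a k‖ = 1)
    (hη : η < 1) (hj₀ : j₀ ∈ S) (hk : k ∈ band 𝕜 a η {j₀}) (hj : j ∈ S) (hne : j ≠ j₀) :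
    ‖⟪a k, a j⟫_𝕜‖ ≤ η :=
  le_of_not_gt fun h => hne (hS.eq_of_mem_band ha hη hj hj₀ ⟨j, rfl, h⟩ hk)

theorem BandSeparated.exists_mem_notMem_band {S P : Finset ι} (hS : BandSeparated 𝕜 a η ↑S)
    (ha : ∀ k, ‖a k‖ = 1) (hη : η < 1) (hcard : #P < #S) : ∃ i ∈ S, i ∉ band 𝕜 a η ↑P := by
  classical
  have hle : #{j ∈ S | j ∈ band 𝕜 a η ↑P} ≤ #P := by
    refine card_le_card_of_forall_subsingleton (fun j k => k ∈ band 𝕜 a η {j}) ?_ ?_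
    · intro j hj
      obtain ⟨k, hk, hjk⟩ := (mem_filter.mp hj).2
      exact ⟨k, hk, mem_band_singleton_comm.mp ⟨k, rfl, hjk⟩⟩
    · intro k _ j hj j' hj'
      exact hS.eq_of_mem_band ha hη (mem_filter.mp hj.1).1 (mem_filter.mp hj'.1).1 hj.2 hj'.2
  obtain ⟨i, hi, hiP⟩ := exists_mem_notMem_of_card_lt_card (hle.trans_lt hcard)
  exact ⟨i, hi, fun h => hiP (mem_filter.mpr ⟨hi, h⟩)⟩

theorem BandSeparated.notMem_band_band (hS : BandSeparated 𝕜 a η S) (hT : T ⊆ band 𝕜 a η S)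
    (hi : i ∈ S) (hiT : i ∉ band 𝕜 a η T) : i ∉ band 𝕜 a η (band 𝕜 a η T) := by
  rintro ⟨l, ⟨k, hkT, hlk⟩, hil⟩
  obtain ⟨j, hjS, hkj⟩ := hT hkT
  obtain rfl : i = j := by
    by_contra hne
    refine Set.eq_empty_iff_forall_notMem.mp (hS i hi j hjS hne) l
      ⟨⟨i, rfl, by rwa [norm_inner_symm]⟩, k, ⟨j, rfl, hkj⟩, hlk⟩
  exact hiT ⟨k, hkT, by rwa [norm_inner_symm]⟩

end Band

section Signal

variable {a : ι → E} {x : ι → 𝕜} {S : Finset ι} {η xmax : ℝ} {i k j₀ : ι}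

theorem sum_norm_erase_le [DecidableEq ι] (hx : ∀ j ∈ S, ‖x j‖ ≤ xmax) (hj₀ : j₀ ∈ S) :
    ∑ j ∈ S.erase j₀, ‖x j‖ ≤ (#S - 1) * xmax := by
  calc _ ≤ #(S.erase j₀) • xmax :=
        sum_le_card_nsmul _ _ _ fun j hj => hx j (mem_of_mem_erase hj)
    _ = _ := by rw [card_erase_of_mem hj₀, nsmul_eq_mul, Nat.cast_pred (card_pos.mpr ⟨j₀, hj₀⟩)]

theorem BandSeparated.norm_inner_sum_smul_le_of_mem_band (hS : BandSeparated 𝕜 a η ↑S)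
    (ha : ∀ k, ‖a k‖ = 1) (hη₀ : 0 ≤ η) (hη : η < 1) (hx : ∀ j ∈ S, ‖x j‖ ≤ xmax)
    (hj₀ : j₀ ∈ S) (hk : k ∈ band 𝕜 a η {j₀}) :
    ‖⟪a k, ∑ j ∈ S, x j • a j⟫_𝕜‖ ≤ xmax + η * ((#S - 1) * xmax) := by
  classical
  have hrest := norm_inner_sum_smul_sub_le (c := x) (u := a k) hj₀
    fun j hj hne => hS.norm_inner_le ha hη hj₀ hk hj hne
  have hpeak : ‖x j₀ * ⟪a k, a j₀⟫_𝕜‖ ≤ xmax := by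
    have hcs : ‖⟪a k, a j₀⟫_𝕜‖ ≤ 1 := by
      simpa [ha] using norm_inner_le_norm (𝕜 := 𝕜) (a k) (a j₀)
    rw [norm_mul]
    exact (mul_le_of_le_one_right (norm_nonneg _) hcs).trans (hx j₀ hj₀)
  calc _ ≤ ‖x j₀ * ⟪a k, a j₀⟫_𝕜‖ + η * ∑ j ∈ S.erase j₀, ‖x j‖ :=
        (norm_le_norm_add_norm_sub' _ _).trans (add_le_add le_rfl hrest)
    _ ≤ _ := by gcongr; exact sum_norm_erase_le hx hj₀

theorem BandSeparated.norm_sub_le_norm_inner_sum_smul (hS : BandSeparated 𝕜 a η ↑S)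
    (ha : ∀ k, ‖a k‖ = 1) (hη₀ : 0 ≤ η) (hη : η < 1) (hx : ∀ j ∈ S, ‖x j‖ ≤ xmax)
    (hi : i ∈ S) : ‖x i‖ - η * ((#S - 1) * xmax) ≤ ‖⟪a i, ∑ j ∈ S, x j • a j⟫_𝕜‖ := by
  classical
  have hrest := norm_inner_sum_smul_sub_le (c := x) (u := a i) hi
    fun j hj hne => hS.norm_inner_le ha hη hi (subset_band ha hη rfl) hj hne
  rw [inner_self_eq_norm_sq_to_K, ha, RCLike.ofReal_one, one_pow, mul_one] at hrest
  have htri := norm_le_norm_add_norm_sub (⟪a i, ∑ j ∈ S, x j • a j⟫_𝕜) (x i)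
  have hsum := sum_norm_erase_le hx hi
  nlinarith

theorem norm_inner_sum_smul_le_of_notMem_band (hη₀ : 0 ≤ η) (hx : ∀ j ∈ S, ‖x j‖ ≤ xmax)
    (hk : k ∉ band 𝕜 a η ↑S) : ‖⟪a k, ∑ j ∈ S, x j • a j⟫_𝕜‖ ≤ η * (#S * xmax) := by
  refine (norm_inner_sum_smul_le_s14 fun j hj => le_of_not_gt fun h => hk ⟨j, hj, h⟩).trans ?_
  gcongr
  simpa using sum_le_card_nsmul S (‖x ·‖) xmax hx

end Signal

variable (𝕜) in
/-- `Ss n`, `xs n`, `rs n` are the paper's `S^n`, `x^n`, `r^n`; step `n + 1` selects `im (n + 1)`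
using the residual `rs n`. -/
structure IsBOMPRun [Fintype ι] (a : ι → E) (b : E) (η : ℝ) (s : ℕ) (Ss : ℕ → Set ι)
    (xs : ℕ → ι → 𝕜) (rs : ℕ → E) (im : ℕ → ι) : Prop where
  supp_zero : Ss 0 = ∅
  coeff_zero : xs 0 = 0
  resid_zero : rs 0 = b
  im_notMem : ∀ n < s, im (n + 1) ∉ band 𝕜 a η (band 𝕜 a η (Ss n))
  im_max : ∀ n < s, ∀ i ∉ band 𝕜 a η (band 𝕜 a η (Ss n)),
    ‖⟪rs n, a i⟫_𝕜‖ ≤ ‖⟪rs n, a (im (n + 1))⟫_𝕜‖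
  supp_succ : ∀ n < s, Ss (n + 1) = Ss n ∪ {im (n + 1)}
  coeff_succ_supp : ∀ n < s, ∀ j, xs (n + 1) j ≠ 0 → j ∈ Ss (n + 1)
  coeff_succ_min : ∀ n < s, ∀ z : ι → 𝕜, (∀ j, z j ≠ 0 → j ∈ Ss (n + 1)) →
    ‖∑ j, xs (n + 1) j • a j - b‖ ≤ ‖∑ j, z j • a j - b‖
  resid_succ : ∀ n < s, rs (n + 1) = b - ∑ j, xs (n + 1) j • a j

namespace IsBOMPRun

variable [Fintype ι] {a : ι → E} {b : E} {η : ℝ} {s : ℕ} {Ss : ℕ → Set ι} {xs : ℕ → ι → 𝕜}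
  {rs : ℕ → E} {im : ℕ → ι} {x : ι → 𝕜} {S : Finset ι} {e : E} {xmin xmax : ℝ}

theorem exists_finset_card_le (h : IsBOMPRun 𝕜 a b η s Ss xs rs im) :
    ∀ n ≤ s, ∃ P : Finset ι, Ss n = ↑P ∧ #P ≤ n
  | 0, _ => ⟨∅, by simp [h.supp_zero]⟩
  | n + 1, hn => by
    classical
    obtain ⟨P, hP, hPn⟩ := h.exists_finset_card_le n (by omega)
    refine ⟨insert (im (n + 1)) P, ?_, (card_insert_le _ _).trans (by omega)⟩
    rw [h.supp_succ n hn, hP, coe_insert, Set.union_singleton]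

theorem coeff_supp (h : IsBOMPRun 𝕜 a b η s Ss xs rs im) :
    ∀ n ≤ s, ∀ j, xs n j ≠ 0 → j ∈ Ss n
  | 0, _, j, hj => by simp [h.coeff_zero] at hj
  | n + 1, hn, j, hj => h.coeff_succ_supp n hn j hj

theorem resid_eq_sum (h : IsBOMPRun 𝕜 a b η s Ss xs rs im) {n : ℕ} (hn : n ≤ s)
    {P : Finset ι} (hP : Ss n = ↑P) : rs n = b - ∑ j ∈ P, xs n j • a j := by
  have hsupp : ∀ j, xs n j • a j ≠ 0 → j ∈ P := fun j hj => by
    simpa [hP] using h.coeff_supp n hn j (left_ne_zero_of_smul hj)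
  rw [Fintype.sum_subset hsupp]
  cases n with
  | zero => simp [h.resid_zero, h.coeff_zero]
  | succ n => exact h.resid_succ n hn

theorem inner_resid_eq_zero (h : IsBOMPRun 𝕜 a b η s Ss xs rs im) (ha : ∀ k, ‖a k‖ = 1)
    {n : ℕ} (hn : n ≤ s) {k : ι} (hk : k ∈ Ss n) : ⟪a k, rs n⟫_𝕜 = 0 := by
  cases n with
  | zero => simp [h.supp_zero] at hk
  | succ n =>
    rw [h.resid_succ n hn]
    exact inner_sub_sum_smul_eq_zero_of_forall_norm_le (h.coeff_succ_supp n hn)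
      (h.coeff_succ_min n hn) hk (ha k)

theorem pairwise_disjoint_band (h : IsBOMPRun 𝕜 a b η s Ss xs rs im) :
    ∀ n ≤ s, (Ss n).Pairwise fun i i' => Disjoint (band 𝕜 a η {i}) (band 𝕜 a η {i'})
  | 0, _ => by simp [h.supp_zero]
  | n + 1, hn => by
    rw [h.supp_succ n hn, Set.union_singleton, Set.pairwise_insert]
    refine ⟨h.pairwise_disjoint_band n (by omega), fun k hk _ => ?_⟩
    have hdisj : Disjoint (band 𝕜 a η {im (n + 1)}) (band 𝕜 a η {k}) :=
      Set.disjoint_left.mpr fun l hl hlk => h.im_notMem n hn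
        ⟨l, ⟨k, hk, by simpa using hlk⟩, by simpa using mem_band_singleton_comm.mp hl⟩
    exact ⟨hdisj, hdisj.symm⟩

theorem norm_inner_le (h : IsBOMPRun 𝕜 a b η s Ss xs rs im) (ha : ∀ k, ‖a k‖ = 1)
    (hη : η < 1) {n : ℕ} (hn : n ≤ s) {j k : ι} (hk : k ∈ Ss n) (hj : j ∈ Ss n) (hne : j ≠ k) :
    ‖⟪a k, a j⟫_𝕜‖ ≤ η :=
  le_of_not_gt fun hkj => Set.disjoint_left.mp (h.pairwise_disjoint_band n hn hk hj hne.symm)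
    (subset_band ha hη rfl) ⟨j, rfl, hkj⟩

theorem sum_norm_coeff_mul_le (h : IsBOMPRun 𝕜 a b η s Ss xs rs im) (ha : ∀ k, ‖a k‖ = 1)
    (hη : η < 1) {n : ℕ} (hn : n ≤ s) {P : Finset ι} (hP : Ss n = ↑P) {β : ℝ}
    (hβ : ∀ k ∈ P, ‖⟪a k, b⟫_𝕜‖ ≤ β) :
    (∑ j ∈ P, ‖xs n j‖) * (1 - (#P - 1) * η) ≤ #P * β := by
  have hPS : ∀ k ∈ P, k ∈ Ss n := fun k hk => by rw [hP]; exact hk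
  refine sum_norm_mul_le_of_norm_inner_sum_smul_le (fun k _ => ha k)
    (fun k hk j hj hne => h.norm_inner_le ha hη hn (hPS k hk) (hPS j hj) hne) fun k hk => ?_
  have horth := h.inner_resid_eq_zero ha hn (hPS k hk)
  rw [h.resid_eq_sum hn hP, inner_sub_right, sub_eq_zero] at horth
  exact horth ▸ hβ k hk

theorem abs_norm_inner_resid_sub_le (h : IsBOMPRun 𝕜 a b η s Ss xs rs im)
    (ha : ∀ k, ‖a k‖ = 1) (hη : η < 1) {n : ℕ} (hn : n ≤ s) {P : Finset ι} (hP : Ss n = ↑P)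
    {y e : E} (hb : b = y + e) {i : ι} (hi : i ∉ band 𝕜 a η (band 𝕜 a η (Ss n))) :
    |‖⟪a i, rs n⟫_𝕜‖ - ‖⟪a i, y⟫_𝕜‖| ≤ ‖e‖ + η * ∑ j ∈ P, ‖xs n j‖ := by
  have hcoh : ∀ k ∈ P, ‖⟪a i, a k⟫_𝕜‖ ≤ η := fun k hk => le_of_not_gt fun hik =>
    hi ⟨k, subset_band ha hη (by rw [hP]; exact hk), hik⟩
  rw [h.resid_eq_sum hn hP, hb, add_sub_assoc, inner_add_right]
  refine (abs_norm_sub_norm_le _ _).trans ?_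
  rw [add_sub_cancel_left, inner_sub_right]
  refine (norm_sub_le _ _).trans (add_le_add ?_ (norm_inner_sum_smul_le_s14 hcoh))
  simpa [ha] using norm_inner_le_norm (𝕜 := 𝕜) (a i) e

theorem im_succ_mem_band (h : IsBOMPRun 𝕜 a b η s Ss xs rs im) (ha : ∀ k, ‖a k‖ = 1)
    (hS : BandSeparated 𝕜 a η ↑S) (hcard : #S = s) (hb : b = ∑ j ∈ S, x j • a j + e)
    (hη : 0 < η) (hxmin_le : ∀ j ∈ S, xmin ≤ ‖x j‖)
    (hxmax : ∀ j ∈ S, ‖x j‖ ≤ xmax) (hcond : η * (5 * s - 4) * xmax + 5 / 2 * ‖e‖ < xmin)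
    {m : ℕ} (hm : m < s) (hSm : Ss m ⊆ band 𝕜 a η ↑S) : im (m + 1) ∈ band 𝕜 a η ↑S := by
  subst hcard
  obtain ⟨j, hj⟩ : S.Nonempty := card_pos.mp (by omega)
  have hxmax₀ : 0 ≤ xmax := (norm_nonneg _).trans (hxmax j hj)
  have hsmall : η * (5 * #S - 4) < 1 := by
    by_contra! hge
    nlinarith [mul_le_mul_of_nonneg_right hge hxmax₀, hxmin_le j hj, hxmax j hj, norm_nonneg e]
  have hη₁ : η < 1 := by
    have hS₁ : (1 : ℝ) ≤ #S := by exact_mod_cast card_pos.mpr ⟨j, hj⟩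
    nlinarith
  obtain ⟨P, hP, hPm⟩ := h.exists_finset_card_le m hm.le
  have hPS : (#P : ℝ) ≤ #S - 1 := by
    rw [le_sub_iff_add_le]
    exact_mod_cast (by omega : #P + 1 ≤ #S)
  obtain ⟨i₀, hi₀S, hi₀P⟩ := hS.exists_mem_notMem_band ha hη₁ (by omega : #P < #S)
  have hi₀ : i₀ ∉ band 𝕜 a η (band 𝕜 a η (Ss m)) :=
    hP ▸ hS.notMem_band_band (hP ▸ hSm) hi₀S hi₀P
  have hsel := h.im_max m hm i₀ hi₀
  rw [norm_inner_symm, norm_inner_symm (rs m)] at hsel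
  by_contra hout
  have hL := h.sum_norm_coeff_mul_le ha hη₁ hm.le hP (β := xmax + η * ((#S - 1) * xmax) + ‖e‖)
    fun k hk => by
      obtain ⟨j₀, hj₀, hkj₀⟩ := hSm (by rw [hP]; exact hk)
      rw [hb, inner_add_right]
      refine (norm_add_le _ _).trans (add_le_add ?_ ?_)
      · exact hS.norm_inner_sum_smul_le_of_mem_band ha hη.le hη₁ hxmax hj₀ ⟨j₀, rfl, hkj₀⟩
      · simpa [ha] using norm_inner_le_norm (𝕜 := 𝕜) (a k) e
  have hr₀ := (abs_le.mp (h.abs_norm_inner_resid_sub_le ha hη₁ hm.le hP hb hi₀)).1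
  have hr₁ := (abs_le.mp (h.abs_norm_inner_resid_sub_le ha hη₁ hm.le hP hb (h.im_notMem m hm))).2
  have hlow := hS.norm_sub_le_norm_inner_sum_smul ha hη.le hη₁ hxmax hi₀S
  have hup := norm_inner_sum_smul_le_of_notMem_band hη.le hxmax hout
  have hηL := two_mul_mul_le_of_mul_one_sub_le hη (Nat.cast_nonneg _) hPS (by linarith) hxmax₀
    (norm_nonneg e) hL
  linarith [hxmin_le i₀ hi₀S]

theorem supp_subset_band (h : IsBOMPRun 𝕜 a b η s Ss xs rs im) (ha : ∀ k, ‖a k‖ = 1)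
    (hS : BandSeparated 𝕜 a η ↑S) (hcard : #S = s) (hb : b = ∑ j ∈ S, x j • a j + e)
    (hη : 0 < η) (hxmin_le : ∀ j ∈ S, xmin ≤ ‖x j‖)
    (hxmax : ∀ j ∈ S, ‖x j‖ ≤ xmax) (hcond : η * (5 * s - 4) * xmax + 5 / 2 * ‖e‖ < xmin) :
    ∀ n ≤ s, Ss n ⊆ band 𝕜 a η ↑S
  | 0, _ => by simp [h.supp_zero]
  | m + 1, hm => by
    have ih := h.supp_subset_band ha hS hcard hb hη hxmin_le hxmax hcond m (by omega)
    rw [h.supp_succ m hm, Set.union_singleton]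
    exact Set.insert_subset
      (h.im_succ_mem_band ha hS hcard hb hη hxmin_le hxmax hcond hm ih) ih

end IsBOMPRun

/-- BOMP performance guarantee (Theorem 2.2): under the separation condition
and η(5s−4)(x_max/x_min) + (5/2)‖e‖₂/x_min < 1, the support of the BOMP output after s
iterations lies in the η-coherence band of supp(x), with each reconstructed index in the
band of a unique true support index. -/
theorem bomp_performance_guarantee
    {N M : ℕ} (a : Fin M → EuclideanSpace ℂ (Fin N))
    (ha : ∀ j, ‖a j‖ = 1)
    (x : Fin M → ℂ) (S : Finset (Fin M)) (s : ℕ)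
    (hcard : S.card = s)
    (hsupp : ∀ j, x j ≠ 0 ↔ j ∈ S)
    (e b : EuclideanSpace ℂ (Fin N))
    (hb : b = (∑ j, x j • a j) + e)
    (η : ℝ) (hη : 0 < η)
    -- the η-coherence band operator on index sets
    (B : Set (Fin M) → Set (Fin M))
    (hB : ∀ T, B T = {i | ∃ k ∈ T, η < ‖(inner ℂ (a i) (a k) : ℂ)‖})
    -- separation condition: B_η(i) ∩ B_η^{(2)}(j) = ∅ for distinct support indices
    (hsep : ∀ i ∈ S, ∀ j ∈ S, i ≠ j → B {i} ∩ B (B {j}) = ∅)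
    (xmin xmax : ℝ) (hxmin : 0 < xmin)
    (hxminle : ∀ j ∈ S, xmin ≤ ‖x j‖)
    (hxmaxle : ∀ j ∈ S, ‖x j‖ ≤ xmax)
    (hcond : η * (5 * (s : ℝ) - 4) * (xmax / xmin) + (5 / 2) * ‖e‖ / xmin < 1)
    -- a run of BOMP: supports Ss, estimates xs, residuals rs, selected indices im
    (Ss : ℕ → Set (Fin M)) (xs : ℕ → Fin M → ℂ)
    (rs : ℕ → EuclideanSpace ℂ (Fin N)) (im : ℕ → Fin M)
    (hS0 : Ss 0 = ∅) (hx0 : xs 0 = 0) (hr0 : rs 0 = b)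
    (hstep : ∀ n, 1 ≤ n → n ≤ s →
      im n ∉ B (B (Ss (n - 1))) ∧
      (∀ i, i ∉ B (B (Ss (n - 1))) →
        ‖(inner ℂ (rs (n - 1)) (a i) : ℂ)‖ ≤ ‖(inner ℂ (rs (n - 1)) (a (im n)) : ℂ)‖) ∧
      Ss n = Ss (n - 1) ∪ {im n} ∧
      (∀ j, xs n j ≠ 0 → j ∈ Ss n) ∧
      (∀ z : Fin M → ℂ, (∀ j, z j ≠ 0 → j ∈ Ss n) →
        ‖(∑ j, xs n j • a j) - b‖ ≤ ‖(∑ j, z j • a j) - b‖) ∧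
      rs n = b - ∑ j, xs n j • a j) :
    -- conclusion for the output x̂ = xs s
    (∀ i, xs s i ≠ 0 → i ∈ B ↑S) ∧
    ∃ f : Fin M → Fin M,
      (∀ i, xs s i ≠ 0 → f i ∈ S ∧ η < ‖(inner ℂ (a i) (a (f i)) : ℂ)‖) ∧
      (∀ i i', xs s i ≠ 0 → xs s i' ≠ 0 → f i = f i' → i = i') := by
  obtain rfl : B = band ℂ a η := funext hB
  have hb' : b = ∑ j ∈ S, x j • a j + e := by
    rw [hb, Fintype.sum_subset fun j hj => (hsupp j).mp (left_ne_zero_of_smul hj)]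
  have hcond' : η * (5 * s - 4) * xmax + 5 / 2 * ‖e‖ < xmin :=
    (div_lt_one hxmin).mp (by rwa [add_div, mul_div_assoc])
  have hrun : IsBOMPRun ℂ a b η s Ss xs rs im := by
    have step := fun n (hn : n < s) => hstep (n + 1) (by omega) hn
    exact ⟨hS0, hx0, hr0, fun n hn => (step n hn).1, fun n hn => (step n hn).2.1,
      fun n hn => (step n hn).2.2.1, fun n hn => (step n hn).2.2.2.1,
      fun n hn => (step n hn).2.2.2.2.1, fun n hn => (step n hn).2.2.2.2.2⟩
  have hxs : ∀ i, xs s i ≠ 0 → i ∈ Ss s := hrun.coeff_supp s le_rfl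
  have hband : ∀ i, xs s i ≠ 0 → i ∈ band ℂ a η ↑S := fun i hi =>
    hrun.supp_subset_band ha hsep hcard hb' hη hxminle hxmaxle hcond' s le_rfl (hxs i hi)
  choose! f hfS hf using fun i hi => (hband i hi : ∃ k ∈ (S : Set (Fin M)), _)
  refine ⟨hband, f, fun i hi => ⟨hfS i hi, hf i hi⟩, fun i i' hi hi' hff => ?_⟩
  by_contra hne
  refine Set.disjoint_left.mp (hrun.pairwise_disjoint_band s le_rfl (hxs i hi) (hxs i' hi') hne)
    (mem_band_singleton_comm.mp ⟨f i, rfl, hf i hi⟩) (mem_band_singleton_comm.mp ⟨f i, rfl, ?_⟩)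
  exact hff ▸ hf i' hi'
end
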